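/- Consider an L-layer GCN as below, with each activation additionally satisfying φ^{(ℓ)}(0) = 0 and with every weight matrix satisfying ‖W^{(ℓ)}‖₂ ≥ 1. Let Ã ∈ ℝ^{n×n} with ‖Ã‖₂ ≤ 1, let X ∈ ℝ^{n×K}, σ > 0, ε ≥ 0, and let μ be a probability measure on ℝ^{n×n} whose support is contained in {Ã' : ‖Ã'‖₂ ≤ 1 and ‖Ã − Ã'‖₂ ≤ ε}. Then μ({Ã' : ‖F_{Ã'}(X) − F_Ã(X)‖_F > σ}) ≤ (∏_{ℓ=1}^{L} ‖W^{(ℓ)}‖₂) · ‖X‖_F · ε · (1 + L · ∏_{ℓ=1}^{L} ‖W^{(ℓ)}‖₂) / σ. -/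

import Mathlib

/-!
Each layer applies a 1-Lipschitz map entrywise to `Ã H W`, and
`‖Ã H W‖_F ≤ ‖Ã‖₂ ‖H‖_F ‖W‖₂`. Hence `‖H⁽ˡ⁾‖_F ≤ Pₗ ‖X‖_F` with `Pₗ = ∏_{k<ℓ} ‖W⁽ᵏ⁾‖₂`, and
splitting `Ã' H' W - Ã H W = Ã' (H' - H) W + (Ã' - Ã) H W` gives, by induction on the depth,
`‖F_{Ã'}(X) - F_Ã(X)‖_F ≤ L P ε ‖X‖_F` for every `Ã'` in the support of `μ`. Since `P ≥ 1` this is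
at most `B = P ‖X‖_F ε (1 + L P)`. An almost surely `B`-bounded quantity exceeds `σ` with
probability `0` when `B ≤ σ`, and with probability at most `1 < B / σ` otherwise.
-/

open MeasureTheory
open scoped BigOperators ENNReal NNReal

/-- An `L`-layer GCN: `H⁽⁰⁾ = X` and `H⁽ˡ⁺¹⁾ = φ⁽ˡ⁺¹⁾(Ã H⁽ˡ⁾ W⁽ˡ⁺¹⁾)`, with the
activation applied entrywise. -/
noncomputable def gcn {n : ℕ} (d : ℕ → ℕ) (φ : ℕ → ℝ → ℝ)
    (A : Matrix (Fin n) (Fin n) ℝ)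
    (W : (ℓ : ℕ) → Matrix (Fin (d ℓ)) (Fin (d (ℓ + 1))) ℝ)
    (X : Matrix (Fin n) (Fin (d 0)) ℝ) : (ℓ : ℕ) → Matrix (Fin n) (Fin (d ℓ)) ℝ
  | 0 => X
  | (ℓ + 1) => (A * gcn d φ A W X ℓ * W ℓ).map (φ (ℓ + 1))

/-- The Frobenius norm of a real matrix. -/
noncomputable def frob {n m : ℕ} (M : Matrix (Fin n) (Fin m) ℝ) : ℝ :=
  Real.sqrt (∑ i : Fin n, ∑ j : Fin m, (M i j) ^ 2)

/-- The spectral norm (operator norm induced by the Euclidean vector norm) of a real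
matrix. -/
noncomputable def spec {n m : ℕ} (M : Matrix (Fin n) (Fin m) ℝ) : ℝ :=
  ‖LinearMap.toContinuousLinearMap (Matrix.toEuclideanLin M)‖

instance matrixMeasurableSpace {a b : ℕ} : MeasurableSpace (Matrix (Fin a) (Fin b) ℝ) :=
  (inferInstance : MeasurableSpace (Fin a → Fin b → ℝ))

open scoped Matrix Matrix.Norms.L2Operator

section MatrixNorms

variable {a b c : ℕ}

lemma spec_eq_norm (M : Matrix (Fin a) (Fin b) ℝ) : spec M = ‖M‖ := rfl

lemma spec_nonneg (M : Matrix (Fin a) (Fin b) ℝ) : 0 ≤ spec M := norm_nonneg M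

lemma spec_transpose (M : Matrix (Fin a) (Fin b) ℝ) : spec Mᵀ = spec M :=
  Matrix.l2_opNorm_conjTranspose M

lemma frob_nonneg (M : Matrix (Fin a) (Fin b) ℝ) : 0 ≤ frob M := Real.sqrt_nonneg _

lemma frob_eq_norm_toLp (M : Matrix (Fin a) (Fin b) ℝ) :
    frob M = ‖(WithLp.toLp 2 (fun p : Fin a × Fin b => M p.1 p.2) :
      EuclideanSpace ℝ (Fin a × Fin b))‖ := by
  simp [frob, EuclideanSpace.norm_eq, Fintype.sum_prod_type]

lemma frob_add_le (M N : Matrix (Fin a) (Fin b) ℝ) : frob (M + N) ≤ frob M + frob N := by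
  simp only [frob_eq_norm_toLp]
  exact norm_add_le (WithLp.toLp 2 _) (WithLp.toLp 2 _)

lemma frob_transpose (M : Matrix (Fin a) (Fin b) ℝ) : frob Mᵀ = frob M := by
  rw [frob, frob, Finset.sum_comm]
  rfl

lemma frob_le_frob_of_abs_le {M N : Matrix (Fin a) (Fin b) ℝ} (h : ∀ i j, |M i j| ≤ |N i j|) :
    frob M ≤ frob N := by
  refine Real.sqrt_le_sqrt (Finset.sum_le_sum fun i _ => Finset.sum_le_sum fun j _ => ?_)
  exact sq_le_sq.mpr (h i j)

lemma sum_sq_mulVec_le (M : Matrix (Fin a) (Fin b) ℝ) (v : Fin b → ℝ) :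
    ∑ i, M.mulVec v i ^ 2 ≤ spec M ^ 2 * ∑ j, v j ^ 2 := by
  have hnorm_sq {k : ℕ} (u : Fin k → ℝ) : ‖WithLp.toLp 2 u‖ ^ 2 = ∑ i, u i ^ 2 := by
    simp [EuclideanSpace.norm_eq, Real.sq_sqrt (Finset.sum_nonneg fun i _ => sq_nonneg (u i))]
  rw [← hnorm_sq, ← hnorm_sq, ← mul_pow]
  exact pow_le_pow_left₀ (norm_nonneg _) (M.l2_opNorm_mulVec (WithLp.toLp 2 v)) 2

lemma frob_mul_le_spec_mul_frob (M : Matrix (Fin a) (Fin b) ℝ)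
    (N : Matrix (Fin b) (Fin c) ℝ) :
    frob (M * N) ≤ spec M * frob N := by
  rw [frob, frob, ← Real.sqrt_sq (spec_nonneg M), ← Real.sqrt_mul (sq_nonneg _)]
  refine Real.sqrt_le_sqrt ?_
  -- compare column by column: the `j`-th column of `M * N` is `M` applied to that of `N`
  rw [Finset.sum_comm, Finset.sum_comm (f := fun i j => N i j ^ 2), Finset.mul_sum]
  refine Finset.sum_le_sum fun j _ => ?_
  simpa [Matrix.mul_apply, Matrix.mulVec, dotProduct] using sum_sq_mulVec_le M (fun i => N i j)

lemma frob_mul_le_frob_mul_spec (M : Matrix (Fin a) (Fin b) ℝ)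
    (N : Matrix (Fin b) (Fin c) ℝ) :
    frob (M * N) ≤ frob M * spec N := by
  rw [← frob_transpose, Matrix.transpose_mul, mul_comm, ← frob_transpose M, ← spec_transpose N]
  exact frob_mul_le_spec_mul_frob _ _

lemma frob_map_sub_map_le {f : ℝ → ℝ} (hf : LipschitzWith 1 f)
    (M N : Matrix (Fin a) (Fin b) ℝ) :
    frob (M.map f - N.map f) ≤ frob (M - N) :=
  frob_le_frob_of_abs_le fun i j => by
    simpa [Real.dist_eq] using hf.dist_le_mul (M i j) (N i j)

lemma frob_map_le {f : ℝ → ℝ} (hf : LipschitzWith 1 f) (hf0 : f 0 = 0)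
    (M : Matrix (Fin a) (Fin b) ℝ) : frob (M.map f) ≤ frob M := by
  simpa [hf0] using frob_map_sub_map_le hf M 0

lemma frob_mul_mul_sub_mul_mul_le (A A' : Matrix (Fin a) (Fin a) ℝ)
    (H H' : Matrix (Fin a) (Fin b) ℝ) (W : Matrix (Fin b) (Fin c) ℝ) :
    frob (A' * H' * W - A * H * W) ≤
      (spec A' * frob (H' - H) + spec (A' - A) * frob H) * spec W := by
  have hsplit : A' * H' * W - A * H * W = (A' * (H' - H) + (A' - A) * H) * W := by
    simp only [Matrix.mul_sub, Matrix.sub_mul, Matrix.add_mul]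
    abel
  rw [hsplit]
  refine (frob_mul_le_frob_mul_spec _ _).trans (mul_le_mul_of_nonneg_right ?_ (spec_nonneg W))
  exact (frob_add_le _ _).trans
    (add_le_add (frob_mul_le_spec_mul_frob _ _) (frob_mul_le_spec_mul_frob _ _))

end MatrixNorms

section GCN

variable {n : ℕ} {d : ℕ → ℕ} {φ : ℕ → ℝ → ℝ}
  {W : (ℓ : ℕ) → Matrix (Fin (d ℓ)) (Fin (d (ℓ + 1))) ℝ} {A A' : Matrix (Fin n) (Fin n) ℝ}
  (X : Matrix (Fin n) (Fin (d 0)) ℝ)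

lemma frob_gcn_le (hφ : ∀ ℓ, LipschitzWith 1 (φ ℓ)) (hφ0 : ∀ ℓ, φ ℓ 0 = 0) (hA : spec A ≤ 1)
    (ℓ : ℕ) : frob (gcn d φ A W X ℓ) ≤ (∏ k ∈ Finset.range ℓ, spec (W k)) * frob X := by
  induction ℓ with
  | zero => simp [gcn]
  | succ ℓ ih =>
    have hW := spec_nonneg (W ℓ)
    calc frob (gcn d φ A W X (ℓ + 1))
        ≤ frob (A * gcn d φ A W X ℓ * W ℓ) := frob_map_le (hφ _) (hφ0 _) _
      _ ≤ spec A * frob (gcn d φ A W X ℓ) * spec (W ℓ) :=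
          (frob_mul_le_frob_mul_spec _ _).trans
            (mul_le_mul_of_nonneg_right (frob_mul_le_spec_mul_frob _ _) hW)
      _ ≤ 1 * ((∏ k ∈ Finset.range ℓ, spec (W k)) * frob X) * spec (W ℓ) := by
          have := frob_nonneg (gcn d φ A W X ℓ)
          gcongr
      _ = (∏ k ∈ Finset.range (ℓ + 1), spec (W k)) * frob X := by
          rw [Finset.prod_range_succ]; ring

lemma frob_gcn_sub_gcn_le (hφ : ∀ ℓ, LipschitzWith 1 (φ ℓ)) (hφ0 : ∀ ℓ, φ ℓ 0 = 0)
    (hA : spec A ≤ 1) (hA' : spec A' ≤ 1) {ε : ℝ} (hAA' : spec (A - A') ≤ ε) (ℓ : ℕ) :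
    frob (gcn d φ A' W X ℓ - gcn d φ A W X ℓ) ≤
      ℓ * (∏ k ∈ Finset.range ℓ, spec (W k)) * ε * frob X := by
  induction ℓ with
  | zero => simp [gcn, frob]
  | succ ℓ ih =>
    have hε : spec (A' - A) ≤ ε := by rwa [spec_eq_norm, norm_sub_rev]
    calc frob (gcn d φ A' W X (ℓ + 1) - gcn d φ A W X (ℓ + 1))
        ≤ frob (A' * gcn d φ A' W X ℓ * W ℓ - A * gcn d φ A W X ℓ * W ℓ) :=
          frob_map_sub_map_le (hφ _) _ _
      _ ≤ (spec A' * frob (gcn d φ A' W X ℓ - gcn d φ A W X ℓ) +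
            spec (A' - A) * frob (gcn d φ A W X ℓ)) * spec (W ℓ) :=
          frob_mul_mul_sub_mul_mul_le _ _ _ _ _
      _ ≤ (1 * (ℓ * (∏ k ∈ Finset.range ℓ, spec (W k)) * ε * frob X) +
            ε * ((∏ k ∈ Finset.range ℓ, spec (W k)) * frob X)) * spec (W ℓ) := by
          have := spec_nonneg (W ℓ)
          have := frob_nonneg (gcn d φ A' W X ℓ - gcn d φ A W X ℓ)
          have := frob_nonneg (gcn d φ A W X ℓ)
          have := (spec_nonneg _).trans hε
          gcongr
          exact frob_gcn_le X hφ hφ0 hA ℓ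
      _ = ↑(ℓ + 1) * (∏ k ∈ Finset.range (ℓ + 1), spec (W k)) * ε * frob X := by
          rw [Finset.prod_range_succ]; push_cast; ring

end GCN

lemma measure_lt_le_ofReal_div_of_ae_le {α : Type*} [MeasurableSpace α] {μ : Measure α}
    [IsProbabilityMeasure μ] {f : α → ℝ} {B σ : ℝ} (hf : ∀ᵐ x ∂μ, f x ≤ B) (hσ : 0 < σ) :
    μ {x | σ < f x} ≤ ENNReal.ofReal (B / σ) := by
  rcases le_or_gt B σ with hBσ | hσB
  · have hnull : μ {x | σ < f x} = 0 := by
      simpa only [not_not] using ae_iff.mp (hf.mono fun x hx => not_lt.mpr (hx.trans hBσ))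
    simp [hnull]
  · calc μ {x | σ < f x} ≤ 1 := prob_le_one
      _ ≤ ENNReal.ofReal (B / σ) := by
          rw [ENNReal.one_le_ofReal, one_le_div hσ]
          exact hσB.le

/-- Theorem 2 (probabilistic / expected-robustness form, structural attacks): if the law
`μ` of the perturbed graph-shift matrix is supported in
`{Ã' : ‖Ã'‖₂ ≤ 1 ∧ ‖Ã − Ã'‖₂ ≤ ε}`, then the probability that the output of an
`L`-layer GCN moves by more than `σ` in Frobenius norm is at most
`(∏ ℓ, ‖W⁽ˡ⁾‖₂) · ‖X‖_F · ε · (1 + L · ∏ ℓ, ‖W⁽ˡ⁾‖₂) / σ`. -/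
theorem gcn_expected_robustness_structural_attack
    {n : ℕ} (L : ℕ) (d : ℕ → ℕ) (φ : ℕ → ℝ → ℝ)
    (W : (ℓ : ℕ) → Matrix (Fin (d ℓ)) (Fin (d (ℓ + 1))) ℝ)
    (hφ : ∀ ℓ, LipschitzWith 1 (φ ℓ)) (hφ0 : ∀ ℓ, φ ℓ 0 = 0)
    (hW : ∀ ℓ < L, 1 ≤ spec (W ℓ))
    (A : Matrix (Fin n) (Fin n) ℝ) (hA : spec A ≤ 1)
    (X : Matrix (Fin n) (Fin (d 0)) ℝ)
    (ε : ℝ) (hε : 0 ≤ ε) (σ : ℝ) (hσ : 0 < σ)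
    (μ : Measure (Matrix (Fin n) (Fin n) ℝ)) [IsProbabilityMeasure μ]
    (hsupp : ∀ᵐ A' ∂μ, spec A' ≤ 1 ∧ spec (A - A') ≤ ε) :
    μ {A' | σ < frob (gcn d φ A' W X L - gcn d φ A W X L)} ≤
      ENNReal.ofReal
        ((∏ ℓ ∈ Finset.range L, spec (W ℓ)) * frob X * ε *
          (1 + (L : ℝ) * ∏ ℓ ∈ Finset.range L, spec (W ℓ)) / σ) := by
  set P := ∏ ℓ ∈ Finset.range L, spec (W ℓ)
  have hP : 1 ≤ P := Finset.one_le_prod fun ℓ hℓ => hW ℓ (Finset.mem_range.mp hℓ)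
  have hLPεX : L * P * ε * frob X ≤ P * frob X * ε * (1 + L * P) := by
    have hPXε : 0 ≤ P * frob X * ε :=
      mul_nonneg (mul_nonneg (zero_le_one.trans hP) (frob_nonneg X)) hε
    linarith [mul_le_mul_of_nonneg_left hP (mul_nonneg hPXε (Nat.cast_nonneg L))]
  refine measure_lt_le_ofReal_div_of_ae_le (hsupp.mono fun A' hA' => ?_) hσ
  exact (frob_gcn_sub_gcn_le X hφ hφ0 hA hA'.1 hA'.2 L).trans hLPεX
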